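/- For every real α with α ≠ −1, there exist a finite set V, a symmetric submodular function f : 2^V → ℝ, and an α-ordering (v_1, …, v_n) of V with respect to f such that (v_{n−1}, v_n) is not a pendent pair of f. -/
import Mathlib

open Finset

def Submodular {V : Type*} [DecidableEq V] [Fintype V] (f : Finset V → ℝ) : Prop :=
  ∀ X Y : Finset V, f X + f Y ≥ f (X ∪ Y) + f (X ∩ Y)

def prefSet {V : Type*} [DecidableEq V] {n : ℕ} (v : Fin n → V) (i : Fin n) : Finset V :=
  (Finset.univ.filter (fun k : Fin n => k < i)).image v

def IsAlphaOrdering {V : Type*} [DecidableEq V] {n : ℕ} (α : ℝ)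
    (f : Finset V → ℝ) (v : Fin n → V) : Prop :=
  ∀ i j : Fin n, i ≤ j →
    f (insert (v i) (prefSet v i)) + α * f {v i} ≤
      f (insert (v j) (prefSet v i)) + α * f {v j}

def PendentPair {V : Type*} [DecidableEq V] [Fintype V]
    (f : Finset V → ℝ) (u w : V) : Prop :=
  ∀ X : Finset V, X ⊂ Finset.univ → (X ∩ ({u, w} : Finset V)).card = 1 → f {w} ≤ f X

/-- Integer base table for the case `α > -1`. -/
def base1 : Finset (Fin 4) → ℤ := fun X =>
  if X = {0} ∨ X = {1} ∨ X = {1,2,3} ∨ X = {0,2,3} ∨ X = {0,1} ∨ X = {2,3} then 1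
  else if X = ∅ ∨ X = Finset.univ then 0
  else 2

/-- Integer perturbation table for the case `α > -1`. -/
def sgn1 : Finset (Fin 4) → ℤ := fun X =>
  if X = {0,1} ∨ X = {2,3} ∨ X = {0,3} ∨ X = {1,2} then 1
  else if X = {0,2} ∨ X = {1,3} then -1
  else 0

/-- Integer base table for the case `α < -1`. -/
def base2 : Finset (Fin 4) → ℤ := fun X =>
  if X = ∅ ∨ X = Finset.univ then 0
  else if X = {2} ∨ X = {3} ∨ X = {0,1,3} ∨ X = {0,1,2} ∨ X = {0,3} ∨ X = {1,2} then 2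
  else if X = {0,2} ∨ X = {1,3} then 4
  else 3

/-- Integer perturbation table for the case `α < -1`. -/
def sgn2 : Finset (Fin 4) → ℤ := fun X =>
  if X = {0,1} ∨ X = {2,3} ∨ X = {0,2} ∨ X = {1,3} then 1
  else if X = {0,3} ∨ X = {1,2} then -1
  else 0

/-- The real-valued function `base + ε · sgn`. -/
def fGen (b s : Finset (Fin 4) → ℤ) (ε : ℝ) (X : Finset (Fin 4)) : ℝ :=
  (b X : ℝ) + ε * (s X : ℝ)

lemma symGen (b s : Finset (Fin 4) → ℤ) (ε : ℝ)
    (h : ∀ X : Finset (Fin 4), b X = b Xᶜ ∧ s X = s Xᶜ) :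
    ∀ X : Finset (Fin 4), fGen b s ε X = fGen b s ε Xᶜ := by
  intro X
  simp [fGen, (h X).1, (h X).2]

lemma submodGen (b s : Finset (Fin 4) → ℤ) (ε : ℝ) (h0 : 0 ≤ ε) (h1 : ε ≤ 1)
    (key : ∀ X Y : Finset (Fin 4),
      b (X ∪ Y) + b (X ∩ Y) ≤ b X + b Y ∧
      b (X ∪ Y) + b (X ∩ Y) + (s (X ∪ Y) + s (X ∩ Y)) ≤
        b X + b Y + (s X + s Y)) :
    Submodular (fGen b s ε) := by
  intro X Y
  obtain ⟨k1, k2⟩ := key X Y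
  have k1' : ((b (X ∪ Y) : ℝ) + b (X ∩ Y)) ≤ (b X : ℝ) + b Y := by exact_mod_cast k1
  have k2' : ((b (X ∪ Y) : ℝ) + b (X ∩ Y)) + ((s (X ∪ Y) : ℝ) + s (X ∩ Y)) ≤
      ((b X : ℝ) + b Y) + ((s X : ℝ) + s Y) := by exact_mod_cast k2
  have hA : (0:ℝ) ≤ ((b X : ℝ) + b Y) - ((b (X ∪ Y) : ℝ) + b (X ∩ Y)) := by linarith
  have hAB : (0:ℝ) ≤ (((b X : ℝ) + b Y) - ((b (X ∪ Y) : ℝ) + b (X ∩ Y)))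
      + (((s X : ℝ) + s Y) - ((s (X ∪ Y) : ℝ) + s (X ∩ Y))) := by linarith
  have h2 : (0:ℝ) ≤ ε * ((((b X : ℝ) + b Y) - ((b (X ∪ Y) : ℝ) + b (X ∩ Y)))
      + (((s X : ℝ) + s Y) - ((s (X ∪ Y) : ℝ) + s (X ∩ Y)))) := mul_nonneg h0 hAB
  have h3 : (0:ℝ) ≤ (1 - ε) * (((b X : ℝ) + b Y) - ((b (X ∪ Y) : ℝ) + b (X ∩ Y))) :=
    mul_nonneg (by linarith) hA
  simp only [fGen, ge_iff_le]
  nlinarith [h2, h3]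

set_option maxHeartbeats 1000000 in
lemma key1 : ∀ X Y : Finset (Fin 4),
    base1 (X ∪ Y) + base1 (X ∩ Y) ≤ base1 X + base1 Y ∧
    base1 (X ∪ Y) + base1 (X ∩ Y) + (sgn1 (X ∪ Y) + sgn1 (X ∩ Y)) ≤
      base1 X + base1 Y + (sgn1 X + sgn1 Y) := by decide

set_option maxHeartbeats 1000000 in
lemma key2 : ∀ X Y : Finset (Fin 4),
    base2 (X ∪ Y) + base2 (X ∩ Y) ≤ base2 X + base2 Y ∧
    base2 (X ∪ Y) + base2 (X ∩ Y) + (sgn2 (X ∪ Y) + sgn2 (X ∩ Y)) ≤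
      base2 X + base2 Y + (sgn2 X + sgn2 Y) := by decide

lemma sym1 : ∀ X : Finset (Fin 4), base1 X = base1 Xᶜ ∧ sgn1 X = sgn1 Xᶜ := by decide
lemma sym2 : ∀ X : Finset (Fin 4), base2 X = base2 Xᶜ ∧ sgn2 X = sgn2 Xᶜ := by decide

lemma pref0 : prefSet (id : Fin 4 → Fin 4) 0 = ∅ := by decide
lemma pref1 : prefSet (id : Fin 4 → Fin 4) 1 = {0} := by decide
lemma pref2 : prefSet (id : Fin 4 → Fin 4) 2 = {0,1} := by decide
lemma pref3 : prefSet (id : Fin 4 → Fin 4) 3 = {0,1,2} := by decide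

/-- Proposition 6.2: for any `α ≠ -1` there are a finite ground set, a symmetric
submodular function `f`, and an `α`-ordering of the ground set with respect to `f`
whose last two elements do not form a pendent pair. -/
theorem stmt_9 (α : ℝ) (hα : α ≠ -1) :
    ∃ (n : ℕ) (hn : 2 ≤ n) (f : Finset (Fin n) → ℝ) (v : Fin n → Fin n),
      (∀ X : Finset (Fin n), f X = f Xᶜ) ∧ Submodular f ∧
      Function.Bijective v ∧ IsAlphaOrdering α f v ∧
      ¬ PendentPair f (v ⟨n - 2, by omega⟩) (v ⟨n - 1, by omega⟩) := by
  rcases lt_or_gt_of_ne hα with hlt | hgt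
  · -- α < -1
    set δ : ℝ := min ((-α - 1) / 2) 1 with hδdef
    have hδ0 : 0 < δ := lt_min (by linarith) one_pos
    have hδ1 : δ ≤ 1 := min_le_right _ _
    have hδα : 2 * δ ≤ -α - 1 := by
      have := min_le_left ((-α - 1) / 2) 1
      nlinarith [this]
    refine ⟨4, by norm_num, fGen base2 sgn2 δ, id, symGen _ _ _ sym2,
      submodGen _ _ _ hδ0.le hδ1 key2, Function.bijective_id, ?_, ?_⟩
    · intro i j hij
      fin_cases i <;> fin_cases j <;>
        simp only [id_eq, show ((⟨0, by omega⟩ : Fin 4)) = 0 from by decide,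
        show ((⟨1, by omega⟩ : Fin 4)) = 1 from by decide,
        show ((⟨2, by omega⟩ : Fin 4)) = 2 from by decide,
        show ((⟨3, by omega⟩ : Fin 4)) = 3 from by decide, pref0, pref1, pref2, pref3, fGen] <;>
        first
          | (exact le_refl _)
          | (exact absurd hij (by decide))
          | (norm_num [show base2 (({0} : Finset (Fin 4))) = 3 from by decide,
              show sgn2 (({0} : Finset (Fin 4))) = 0 from by decide,
              show base2 (({1} : Finset (Fin 4))) = 3 from by decide,
              show sgn2 (({1} : Finset (Fin 4))) = 0 from by decide,
              show base2 (({2} : Finset (Fin 4))) = 2 from by decide,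
              show sgn2 (({2} : Finset (Fin 4))) = 0 from by decide,
              show base2 (({3} : Finset (Fin 4))) = 2 from by decide,
              show sgn2 (({3} : Finset (Fin 4))) = 0 from by decide,
              show base2 (insert (0:Fin 4) ∅) = 3 from by decide,
              show sgn2 (insert (0:Fin 4) ∅) = 0 from by decide,
              show base2 (insert (1:Fin 4) ∅) = 3 from by decide,
              show sgn2 (insert (1:Fin 4) ∅) = 0 from by decide,
              show base2 (insert (2:Fin 4) ∅) = 2 from by decide,
              show sgn2 (insert (2:Fin 4) ∅) = 0 from by decide,
              show base2 (insert (3:Fin 4) ∅) = 2 from by decide,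
              show sgn2 (insert (3:Fin 4) ∅) = 0 from by decide,
              show base2 (insert (1:Fin 4) {0}) = 3 from by decide,
              show sgn2 (insert (1:Fin 4) {0}) = 1 from by decide,
              show base2 (insert (2:Fin 4) {0}) = 4 from by decide,
              show sgn2 (insert (2:Fin 4) {0}) = 1 from by decide,
              show base2 (insert (3:Fin 4) {0}) = 2 from by decide,
              show sgn2 (insert (3:Fin 4) {0}) = -1 from by decide,
              show base2 (insert (2:Fin 4) {0,1}) = 2 from by decide,
              show sgn2 (insert (2:Fin 4) {0,1}) = 0 from by decide,
              show base2 (insert (3:Fin 4) {0,1}) = 2 from by decide,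
              show sgn2 (insert (3:Fin 4) {0,1}) = 0 from by decide,
              show base2 (insert (3:Fin 4) {0,1,2}) = 0 from by decide,
              show sgn2 (insert (3:Fin 4) {0,1,2}) = 0 from by decide] <;>
             linarith)
    · intro hp
      have hx := hp {0, 3} (by decide) (by decide)
      simp only [id_eq, fGen] at hx
      simp only [show ((⟨4 - 1, by omega⟩ : Fin 4)) = 3 from by decide] at hx
      rw [show base2 {(3:Fin 4)} = 2 from by decide, show sgn2 {(3:Fin 4)} = 0 from by decide,
        show base2 {(0:Fin 4), 3} = 2 from by decide,
        show sgn2 {(0:Fin 4), 3} = -1 from by decide] at hx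
      push_cast at hx
      linarith
  · -- α > -1
    set ε : ℝ := min ((α + 1) / 2) 1 with hεdef
    have hε0 : 0 < ε := lt_min (by linarith) one_pos
    have hε1 : ε ≤ 1 := min_le_right _ _
    have hεα : 2 * ε ≤ α + 1 := by
      have := min_le_left ((α + 1) / 2) 1
      nlinarith [this]
    refine ⟨4, by norm_num, fGen base1 sgn1 ε, id, symGen _ _ _ sym1,
      submodGen _ _ _ hε0.le hε1 key1, Function.bijective_id, ?_, ?_⟩
    · intro i j hij
      fin_cases i <;> fin_cases j <;>
        simp only [id_eq, show ((⟨0, by omega⟩ : Fin 4)) = 0 from by decide,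
        show ((⟨1, by omega⟩ : Fin 4)) = 1 from by decide,
        show ((⟨2, by omega⟩ : Fin 4)) = 2 from by decide,
        show ((⟨3, by omega⟩ : Fin 4)) = 3 from by decide, pref0, pref1, pref2, pref3, fGen] <;>
        first
          | (exact le_refl _)
          | (exact absurd hij (by decide))
          | (norm_num [show base1 (({0} : Finset (Fin 4))) = 1 from by decide,
              show sgn1 (({0} : Finset (Fin 4))) = 0 from by decide,
              show base1 (({1} : Finset (Fin 4))) = 1 from by decide,
              show sgn1 (({1} : Finset (Fin 4))) = 0 from by decide,
              show base1 (({2} : Finset (Fin 4))) = 2 from by decide,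
              show sgn1 (({2} : Finset (Fin 4))) = 0 from by decide,
              show base1 (({3} : Finset (Fin 4))) = 2 from by decide,
              show sgn1 (({3} : Finset (Fin 4))) = 0 from by decide,
              show base1 (insert (0:Fin 4) ∅) = 1 from by decide,
              show sgn1 (insert (0:Fin 4) ∅) = 0 from by decide,
              show base1 (insert (1:Fin 4) ∅) = 1 from by decide,
              show sgn1 (insert (1:Fin 4) ∅) = 0 from by decide,
              show base1 (insert (2:Fin 4) ∅) = 2 from by decide,
              show sgn1 (insert (2:Fin 4) ∅) = 0 from by decide,
              show base1 (insert (3:Fin 4) ∅) = 2 from by decide,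
              show sgn1 (insert (3:Fin 4) ∅) = 0 from by decide,
              show base1 (insert (1:Fin 4) {0}) = 1 from by decide,
              show sgn1 (insert (1:Fin 4) {0}) = 1 from by decide,
              show base1 (insert (2:Fin 4) {0}) = 2 from by decide,
              show sgn1 (insert (2:Fin 4) {0}) = -1 from by decide,
              show base1 (insert (3:Fin 4) {0}) = 2 from by decide,
              show sgn1 (insert (3:Fin 4) {0}) = 1 from by decide,
              show base1 (insert (2:Fin 4) {0,1}) = 2 from by decide,
              show sgn1 (insert (2:Fin 4) {0,1}) = 0 from by decide,
              show base1 (insert (3:Fin 4) {0,1}) = 2 from by decide,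
              show sgn1 (insert (3:Fin 4) {0,1}) = 0 from by decide,
              show base1 (insert (3:Fin 4) {0,1,2}) = 0 from by decide,
              show sgn1 (insert (3:Fin 4) {0,1,2}) = 0 from by decide] <;>
             linarith)
    · intro hp
      have hx := hp {0, 2} (by decide) (by decide)
      simp only [id_eq, fGen] at hx
      simp only [show ((⟨4 - 1, by omega⟩ : Fin 4)) = 3 from by decide] at hx
      rw [show base1 {(3:Fin 4)} = 2 from by decide, show sgn1 {(3:Fin 4)} = 0 from by decide,
        show base1 {(0:Fin 4), 2} = 2 from by decide,
        show sgn1 {(0:Fin 4), 2} = -1 from by decide] at hx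
      push_cast at hx
      linarith
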